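/- Cauchy analog of Joe's theorem. For n ≥ 1, let C(u) = 1/2 + arctan(u)/π be the standard Cauchy distribution function, and let B_C ⊆ ℝ^n be the set of Cauchy mean score sequences, i.e. B_C = { x : Fin n → ℝ | ∃ α : Fin n → ℝ, ∀ i, x i = ∑_{j ≠ i} C(α i − α j) }. Let M ⊆ ℝ^n be the set of mean score sequences of win-probability matrices of size n. Then the closure of B_C in ℝ^n equals M. -/

import Mathlib

/-!
Mean score sequences form a closed set, the continuous image of the compact set of
win-probability matrices, and it contains the Cauchy ones. Conversely, mixing a win-probability
matrix `p` with the fair matrix `1/2` bounds it away from `0` and `1`, and such a matrix has exactly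
the mean scores of a Cauchy matrix: with `q i j = p i j - 1/2` and `A' = arctan / π`, a minimiser
of the energy `½ ∑ᵢⱼ A (αᵢ - αⱼ) - ∑ᵢ (∑ⱼ qᵢⱼ) αᵢ + (∑ᵢ αᵢ)²` solves
`∑ⱼ arctan (αᵢ - αⱼ) / π = ∑ⱼ qᵢⱼ`. The minimiser exists because the energy is coercive:
`A u ≥ (1/2 - δ) |u| - K` for every `δ > 0`, while `|qᵢⱼ| < 1/2`.
-/

/-- The standard Cauchy distribution function `C(u) = 1/2 + arctan(u)/π`. -/
noncomputable def cauchyC (u : ℝ) : ℝ := 1 / 2 + Real.arctan u / Real.pi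

/-- A win-probability matrix of size `n`. -/
def IsWinProbMatrix {n : ℕ} (p : Fin n → Fin n → ℝ) : Prop :=
  (∀ i j, 0 ≤ p i j ∧ p i j ≤ 1) ∧ ∀ i j, i ≠ j → p i j + p j i = 1

/-- Mean score sequence of a win-probability matrix. -/
def meanScore {n : ℕ} (p : Fin n → Fin n → ℝ) (i : Fin n) : ℝ :=
  ∑ j ∈ Finset.univ.filter (fun j => j ≠ i), p i j

open Real Filter Topology Finset

noncomputable def cauchyPotential (u : ℝ) : ℝ := (u * arctan u - log (1 + u ^ 2) / 2) / π

theorem hasDerivAt_cauchyPotential (u : ℝ) : HasDerivAt cauchyPotential (arctan u / π) u := by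
  have h1 : 0 < 1 + u ^ 2 := by positivity
  have h := (((hasDerivAt_id u).mul (hasDerivAt_arctan u)).sub
    ((((hasDerivAt_pow 2 u).const_add 1).log h1.ne').div_const 2)).div_const π
  refine h.congr_deriv ?_
  simp only [id, Nat.cast_ofNat]
  field_simp
  ring

theorem continuous_cauchyPotential : Continuous cauchyPotential :=
  continuous_iff_continuousAt.2 fun u => (hasDerivAt_cauchyPotential u).continuousAt

theorem sub_one_le_mul_arctan (u : ℝ) : π * |u| / 2 - 1 ≤ u * arctan u := by
  rcases eq_or_ne u 0 with rfl | hu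
  · simp
  have hpos : 0 < |u| := abs_pos.2 hu
  have habs : u * arctan u = |u| * arctan |u| := by
    rcases abs_cases u with ⟨h, _⟩ | ⟨h, _⟩ <;> simp [h, arctan_neg]
  -- `π/2 - arctan x = arctan x⁻¹ ≤ x⁻¹`
  have hinv : arctan |u|⁻¹ ≤ |u|⁻¹ := by
    simpa using le_tan (arctan_nonneg.2 (inv_nonneg.2 hpos.le)) (arctan_lt_pi_div_two _)
  rw [arctan_inv_of_pos hpos] at hinv
  rw [habs]
  have := mul_le_mul_of_nonneg_left hinv hpos.le
  rw [mul_inv_cancel₀ hpos.ne'] at this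
  linarith [mul_sub |u| (π / 2) (arctan |u|)]

theorem exists_sub_le_cauchyPotential {δ : ℝ} (hδ : 0 < δ) :
    ∃ K, ∀ u, (1 / 2 - δ) * |u| - K ≤ cauchyPotential u := by
  have hπ := pi_pos
  have hε : 0 < π * δ := by positivity
  refine ⟨(π * δ - log (π * δ)) / π, fun u => ?_⟩
  have hlog_sq : log (1 + u ^ 2) ≤ 2 * log (1 + |u|) := by
    calc log (1 + u ^ 2) ≤ log ((1 + |u|) ^ 2) :=
          log_le_log (by positivity) (by nlinarith [sq_abs u, abs_nonneg u])
      _ = 2 * log (1 + |u|) := by rw [log_pow]; norm_num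
  -- `log y ≤ ε y - 1 - log ε`, from `log (ε y) ≤ ε y - 1`
  have hlog_lin : log (1 + |u|) ≤ π * δ * (1 + |u|) - 1 - log (π * δ) := by
    have := log_le_sub_one_of_pos (mul_pos hε (by positivity : (0 : ℝ) < 1 + |u|))
    rw [log_mul hε.ne' (by positivity)] at this
    linarith
  have hK : (π * δ - log (π * δ)) / π * π = π * δ - log (π * δ) := div_mul_cancel₀ _ hπ.ne'
  rw [cauchyPotential, le_div_iff₀ hπ]
  linarith [sub_one_le_mul_arctan u]

section Energy

variable {ι : Type*} [Fintype ι]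

theorem sum_sum_mul_sub_of_antisymm (M : ι → ι → ℝ) (hM : ∀ i j, M j i = -M i j) (v : ι → ℝ) :
    ∑ i, ∑ j, M i j * (v i - v j) = 2 * ∑ i, v i * ∑ j, M i j := by
  have hswap : ∑ i, ∑ j, M i j * v j = -∑ i, ∑ j, M i j * v i := by
    rw [sum_comm, ← sum_neg_distrib]
    exact sum_congr rfl fun j _ => by
      rw [← sum_neg_distrib]
      exact sum_congr rfl fun i _ => by rw [hM j i, neg_mul]
  have hrow : ∑ i, ∑ j, M i j * v i = ∑ i, v i * ∑ j, M i j := by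
    simp_rw [mul_sum, mul_comm (v _)]
  rw [← hrow]
  simp only [mul_sub, sum_sub_distrib, hswap]
  ring

theorem sum_sum_eq_zero_of_antisymm (M : ι → ι → ℝ) (hM : ∀ i j, M j i = -M i j) :
    ∑ i, ∑ j, M i j = 0 := by
  simpa using sum_sum_mul_sub_of_antisymm M hM 1

theorem norm_le_sum_sum_abs_sub_add_abs_sum (α : ι → ℝ) :
    ‖α‖ ≤ ∑ i, ∑ j, |α i - α j| + |∑ i, α i| := by
  refine pi_norm_le_iff_of_nonneg (by positivity) |>.2 fun i => ?_
  have hcard : (1 : ℝ) ≤ Fintype.card ι := by exact_mod_cast Fintype.card_pos_iff.2 ⟨i⟩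
  have hsplit : Fintype.card ι * α i = ∑ j, (α i - α j) + ∑ j, α j := by
    simp [sum_sub_distrib, card_univ]
  calc ‖α i‖ ≤ Fintype.card ι * |α i| := by
        rw [norm_eq_abs]; exact le_mul_of_one_le_left (abs_nonneg _) hcard
    _ = |∑ j, (α i - α j) + ∑ j, α j| := by
        rw [← hsplit, abs_mul, Nat.abs_cast]
    _ ≤ ∑ j, |α i - α j| + |∑ j, α j| :=
        (abs_add_le _ _).trans (add_le_add (abs_sum_le_sum_abs _ _) le_rfl)
    _ ≤ ∑ i, ∑ j, |α i - α j| + |∑ i, α i| :=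
        add_le_add (single_le_sum (f := fun i => ∑ j, |α i - α j|)
          (fun _ _ => by positivity) (mem_univ i)) le_rfl

/-- The last term removes the invariance of the others under translation of `α`. -/
noncomputable def cauchyEnergy (c α : ι → ℝ) : ℝ :=
  (∑ i, ∑ j, cauchyPotential (α i - α j)) / 2 - ∑ i, c i * α i + (∑ i, α i) ^ 2

theorem continuous_cauchyEnergy (c : ι → ℝ) : Continuous (cauchyEnergy c) := by
  unfold cauchyEnergy
  have := continuous_cauchyPotential
  fun_prop

theorem exists_sub_le_cauchyEnergy (q : ι → ι → ℝ) (hq : ∀ i j, q j i = -q i j) {θ : ℝ}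
    (hθ : θ < 1 / 2) (hqθ : ∀ i j, |q i j| ≤ θ) :
    ∃ μ > 0, ∃ K, ∀ α, μ * ‖α‖ - K ≤ cauchyEnergy (fun i => ∑ j, q i j) α := by
  unfold cauchyEnergy
  set δ := (1 / 2 - θ) / 2
  have hδ : 0 < δ := by positivity
  obtain ⟨K, hK⟩ := exists_sub_le_cauchyPotential hδ
  refine ⟨δ / 2, by positivity, δ ^ 2 / 16 + Fintype.card ι ^ 2 * K / 2, fun α => ?_⟩
  set D := ∑ i, ∑ j, |α i - α j|
  set S := ∑ i, α i
  have hlin : ∑ i, (∑ j, q i j) * α i ≤ θ * D / 2 := by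
    have h := sum_sum_mul_sub_of_antisymm q hq α
    have hle : ∑ i, ∑ j, q i j * (α i - α j) ≤ θ * D := by
      rw [mul_sum]
      refine sum_le_sum fun i _ => ?_
      rw [mul_sum]
      exact sum_le_sum fun j _ => (le_abs_self _).trans <| by
        rw [abs_mul]; exact mul_le_mul_of_nonneg_right (hqθ i j) (abs_nonneg _)
    simp only [mul_comm (α _)] at h
    linarith
  have hpot : (1 / 2 - δ) * D - Fintype.card ι ^ 2 * K ≤ ∑ i, ∑ j, cauchyPotential (α i - α j) := by
    calc (1 / 2 - δ) * D - Fintype.card ι ^ 2 * K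
        = ∑ i, ∑ j, ((1 / 2 - δ) * |α i - α j| - K) := by
          simp only [D, sum_sub_distrib, mul_sum, sum_const, card_univ, nsmul_eq_mul]; ring
      _ ≤ _ := sum_le_sum fun i _ => sum_le_sum fun j _ => hK (α i - α j)
  have hnorm := norm_le_sum_sum_abs_sub_add_abs_sum α
  have hS : δ / 2 * |S| - δ ^ 2 / 16 ≤ S ^ 2 := by nlinarith [sq_nonneg (|S| - δ / 4), sq_abs S]
  have hθD : θ * D = D / 2 - 2 * δ * D := by simp only [δ]; ring
  have hnormδ := mul_le_mul_of_nonneg_left hnorm (by positivity : 0 ≤ δ / 2)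
  linarith

theorem hasDerivAt_cauchyEnergy_add_smul (c α v : ι → ℝ) :
    HasDerivAt (fun s : ℝ => cauchyEnergy c (α + s • v))
      (∑ i, v i * (∑ j, arctan (α i - α j) / π - c i + 2 * ∑ j, α j)) 0 := by
  have hcoord : ∀ i, HasDerivAt (fun s : ℝ => α i + s * v i) (v i) 0 := fun i => by
    simpa using ((hasDerivAt_id (0 : ℝ)).mul_const (v i)).const_add (α i)
  have hpot := HasDerivAt.fun_sum fun i (_ : i ∈ univ) => HasDerivAt.fun_sum
    fun j (_ : j ∈ univ) => (hasDerivAt_cauchyPotential (α i - α j)).comp_of_eq (0 : ℝ)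
      ((hcoord i).sub (hcoord j)) (by simp)
  have hlin := HasDerivAt.fun_sum fun i (_ : i ∈ univ) => (hcoord i).const_mul (c i)
  have hsum := (HasDerivAt.fun_sum fun i (_ : i ∈ univ) => hcoord i).fun_pow 2
  refine (((hpot.div_const 2).sub hlin).add hsum).congr_deriv ?_
  rw [sum_sum_mul_sub_of_antisymm _ (fun i j => by rw [← neg_sub, arctan_neg, neg_div])]
  simp only [zero_mul, add_zero, mul_add, mul_sub, sum_add_distrib, sum_sub_distrib, ← sum_mul,
    mul_comm (c _) (v _)]
  ring

theorem exists_sum_arctan_div_pi_eq (q : ι → ι → ℝ) (hq : ∀ i j, q j i = -q i j) {θ : ℝ}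
    (hθ : θ < 1 / 2) (hqθ : ∀ i j, |q i j| ≤ θ) :
    ∃ α : ι → ℝ, ∀ i, ∑ j, arctan (α i - α j) / π = ∑ j, q i j := by
  classical
  set c := fun i => ∑ j, q i j
  obtain ⟨μ, hμ, K, hG⟩ := exists_sub_le_cauchyEnergy q hq hθ hqθ
  have hcoercive : Tendsto (cauchyEnergy c) (cocompact _) atTop :=
    tendsto_atTop_mono hG <| (tendsto_atTop_add_const_right _ (-K)
      (tendsto_id.const_mul_atTop hμ)).comp tendsto_norm_cocompact_atTop
  obtain ⟨α, hmin⟩ := (continuous_cauchyEnergy c).exists_forall_le hcoercive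
  set g := fun i => ∑ j, arctan (α i - α j) / π - c i + 2 * ∑ j, α j
  have hcrit : ∀ k, g k = 0 := fun k => by
    have hloc : IsLocalMin (fun s : ℝ => cauchyEnergy c (α + s • Pi.single k 1)) 0 :=
      Eventually.of_forall fun s => by simpa using hmin _
    simpa [Pi.single_apply] using hloc.hasDerivAt_eq_zero (hasDerivAt_cauchyEnergy_add_smul c α _)
  -- summing the critical point equations, the antisymmetric parts cancel
  have hsum : Fintype.card ι * (2 * ∑ j, α j) = 0 := by
    have := sum_eq_zero fun k (_ : k ∈ univ) => hcrit k
    simp only [g, sum_add_distrib, sum_sub_distrib, sum_const, card_univ, nsmul_eq_mul] at this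
    rwa [sum_sum_eq_zero_of_antisymm (fun i j => arctan (α i - α j) / π)
      (fun i j => by rw [← neg_sub, arctan_neg, neg_div]), sum_sum_eq_zero_of_antisymm q hq,
      sub_zero, zero_add] at this
  refine ⟨α, fun i => ?_⟩
  have hcard : (Fintype.card ι : ℝ) ≠ 0 := by exact_mod_cast (Fintype.card_pos_iff.2 ⟨i⟩).ne'
  have hS : ∑ j, α j = 0 := by simpa [hcard] using hsum
  simpa [g, c, hS, sub_eq_zero] using hcrit i

end Energy

theorem cauchyC_add_cauchyC_neg (u : ℝ) : cauchyC u + cauchyC (-u) = 1 := by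
  rw [cauchyC, cauchyC, arctan_neg, neg_div]
  ring

theorem cauchyC_mem_Icc (u : ℝ) : cauchyC u ∈ Set.Icc 0 1 := by
  have hπ := pi_pos
  have h₁ : -(1 / 2) * π < arctan u := by linarith [neg_pi_div_two_lt_arctan u]
  have h₂ : arctan u < 1 / 2 * π := by linarith [arctan_lt_pi_div_two u]
  rw [← lt_div_iff₀ hπ] at h₁
  rw [← div_lt_iff₀ hπ] at h₂
  constructor <;> unfold cauchyC <;> linarith

theorem isWinProbMatrix_cauchyC {n : ℕ} (α : Fin n → ℝ) :
    IsWinProbMatrix fun i j => cauchyC (α i - α j) :=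
  ⟨fun _ _ => cauchyC_mem_Icc _, fun i j _ => by
    simpa only [neg_sub] using cauchyC_add_cauchyC_neg (α i - α j)⟩

theorem isCompact_setOf_isWinProbMatrix (n : ℕ) :
    IsCompact {p : Fin n → Fin n → ℝ | IsWinProbMatrix p} := by
  have hbox : IsCompact
      (Set.univ.pi fun _ : Fin n => Set.univ.pi fun _ : Fin n => Set.Icc (0 : ℝ) 1) :=
    isCompact_univ_pi fun _ => isCompact_univ_pi fun _ => isCompact_Icc
  have hsum : IsClosed {p : Fin n → Fin n → ℝ | ∀ i j, i ≠ j → p i j + p j i = 1} := by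
    simp only [Set.ofPred_forall]
    exact isClosed_iInter fun i => isClosed_iInter fun j => isClosed_iInter fun _ =>
      isClosed_eq (by fun_prop) continuous_const
  convert hbox.inter_right hsum using 1
  ext p
  simp only [IsWinProbMatrix, Set.mem_ofPred_eq, Set.mem_inter_iff, Set.mem_univ_pi, Set.mem_Icc]

theorem continuous_meanScore (n : ℕ) : Continuous (meanScore : (Fin n → Fin n → ℝ) → Fin n → ℝ) :=
  continuous_pi fun _ => continuous_finsetSum _ fun _ _ => by fun_prop

theorem exists_cauchyC_sum_eq_meanScore {n : ℕ} {p : Fin n → Fin n → ℝ}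
    (hp : ∀ i j, i ≠ j → p i j + p j i = 1) {η : ℝ} (hη : 0 < η)
    (hpη : ∀ i j, i ≠ j → η ≤ p i j) :
    ∃ α : Fin n → ℝ, ∀ i,
      meanScore p i = ∑ j ∈ Finset.univ.filter (fun j => j ≠ i), cauchyC (α i - α j) := by
  set q : Fin n → Fin n → ℝ := fun i j => if i = j then 0 else p i j - 1 / 2
  have hq : ∀ i j, q j i = -q i j := fun i j => by
    rcases eq_or_ne i j with rfl | hij
    · simp [q]
    · simp only [q, if_neg hij, if_neg hij.symm]; linarith [hp i j hij]
  have hqη : ∀ i j, |q i j| ≤ max (1 / 2 - η) 0 := fun i j => by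
    rcases eq_or_ne i j with rfl | hij
    · simp [q]
    · simp only [q, if_neg hij, le_max_iff, abs_le]
      left; constructor <;> linarith [hpη i j hij, hpη j i hij.symm, hp i j hij]
  obtain ⟨α, hα⟩ := exists_sum_arctan_div_pi_eq q hq (max_lt (by linarith) (by norm_num)) hqη
  refine ⟨α, fun i => ?_⟩
  rw [meanScore, ← sub_eq_zero, ← sum_sub_distrib]
  calc ∑ j ∈ univ.filter (fun j => j ≠ i), (p i j - cauchyC (α i - α j))
      = ∑ j ∈ univ.filter (fun j => j ≠ i), (q i j - arctan (α i - α j) / π) :=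
        sum_congr rfl fun j hj => by
          simp only [q, if_neg (mem_filter.1 hj).2.symm, cauchyC]; ring
    _ = ∑ j, (q i j - arctan (α i - α j) / π) :=
        sum_filter_of_ne fun j _ h hji => h (by simp [q, hji])
    _ = 0 := by rw [sum_sub_distrib, hα, sub_self]

def cauchyScoreSet (n : ℕ) : Set (Fin n → ℝ) :=
  {x | ∃ α : Fin n → ℝ, ∀ i, x i = ∑ j ∈ Finset.univ.filter (fun j => j ≠ i), cauchyC (α i - α j)}

def meanScoreSet (n : ℕ) : Set (Fin n → ℝ) :=
  {x | ∃ p : Fin n → Fin n → ℝ, IsWinProbMatrix p ∧ ∀ i, x i = meanScore p i}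

theorem meanScoreSet_eq_image (n : ℕ) :
    meanScoreSet n = meanScore '' {p | IsWinProbMatrix p} := by
  ext x
  simp only [meanScoreSet, Set.mem_image, Set.mem_ofPred_eq, funext_iff, eq_comm]

theorem isClosed_meanScoreSet (n : ℕ) : IsClosed (meanScoreSet n) := by
  rw [meanScoreSet_eq_image]
  exact ((isCompact_setOf_isWinProbMatrix n).image (continuous_meanScore n)).isClosed

theorem cauchyScoreSet_subset_meanScoreSet (n : ℕ) : cauchyScoreSet n ⊆ meanScoreSet n :=
  fun _ ⟨α, hα⟩ => ⟨_, isWinProbMatrix_cauchyC α, hα⟩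

theorem meanScore_mem_closure_cauchyScoreSet {n : ℕ} {p : Fin n → Fin n → ℝ}
    (hp : IsWinProbMatrix p) : meanScore p ∈ closure (cauchyScoreSet n) := by
  set mix : ℝ → Fin n → Fin n → ℝ := fun t i j => (1 - t) * p i j + t / 2
  have hlim : Tendsto (fun t => meanScore (mix t)) (𝓝[>] 0) (𝓝 (meanScore p)) := by
    have h0 : mix 0 = p := by ext; simp [mix]
    have h := ((continuous_meanScore n).comp (by fun_prop : Continuous mix)).tendsto 0
    rw [Function.comp_apply, h0] at h
    exact h.mono_left nhdsWithin_le_nhds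
  refine mem_closure_of_tendsto hlim ?_
  filter_upwards [Ioo_mem_nhdsGT one_pos] with t ⟨ht₀, ht₁⟩
  obtain ⟨α, hα⟩ := exists_cauchyC_sum_eq_meanScore (p := mix t) (η := t / 2)
    (fun i j hij => by simp only [mix]; linear_combination (1 - t) * hp.2 i j hij)
    (by positivity) (fun i j _ => by
      simp only [mix]
      nlinarith [(hp.1 i j).1])
  exact ⟨α, hα⟩

theorem cauchy_joe_theorem_general (n : ℕ) :
    closure { x : Fin n → ℝ | ∃ α : Fin n → ℝ, ∀ i,
        x i = ∑ j ∈ Finset.univ.filter (fun j => j ≠ i), cauchyC (α i - α j) }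
      = { x : Fin n → ℝ | ∃ p : Fin n → Fin n → ℝ,
            IsWinProbMatrix p ∧ ∀ i, x i = meanScore p i } := by
  change closure (cauchyScoreSet n) = meanScoreSet n
  refine subset_antisymm
    (closure_minimal (cauchyScoreSet_subset_meanScoreSet n) (isClosed_meanScoreSet n)) ?_
  rintro x ⟨p, hp, hx⟩
  rw [funext hx]
  exact meanScore_mem_closure_cauchyScoreSet hp

/-- Cauchy analog of Joe's theorem: the closure of the set of Cauchy mean
score sequences is the set of all mean score sequences. -/
theorem cauchy_joe_theorem (n : ℕ) (hn : 1 ≤ n) :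
    closure { x : Fin n → ℝ | ∃ α : Fin n → ℝ, ∀ i,
        x i = ∑ j ∈ Finset.univ.filter (fun j => j ≠ i), cauchyC (α i - α j) }
      = { x : Fin n → ℝ | ∃ p : Fin n → Fin n → ℝ,
            IsWinProbMatrix p ∧ ∀ i, x i = meanScore p i } :=
  cauchy_joe_theorem_general n
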